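/- arXiv:math/0002241 — 4 statements merged into one kernel-verified Lean document; each statement's English description precedes it below -/
import Mathlib

section
/- Let T be an uncountable set and (B_t)_{t∈T} a family of Banach spaces, and let r : ⊕_{t∈T} B_t → ⊕_{t∈T} B_t be a continuous linear map of the locally convex direct sum into itself. Then for every countable subset A ⊆ T there exists a countable subset S ⊆ T with A ⊆ S such that r(⊕_{t∈S} B_t) ⊆ ⊕_{t∈S} B_t. -/
open DFinsupp
open scoped ENNReal

/-- The locally convex direct sum topology on `Π₀ t, B t`: the finest locally convex
vector-space topology making every canonical inclusion `B t → Π₀ t, B t` continuous. -/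
noncomputable def lcSumTopology {T : Type*} (B : T → Type*) [DecidableEq T]
    [∀ t, AddCommGroup (B t)] [∀ t, Module ℝ (B t)] [∀ t, TopologicalSpace (B t)] :
    TopologicalSpace (Π₀ t, B t) :=
  sInf {τ : TopologicalSpace (Π₀ t, B t) |
    @IsTopologicalAddGroup _ τ _ ∧ @ContinuousSMul ℝ _ _ _ τ ∧
    @LocallyConvexSpace ℝ _ _ _ _ _ τ ∧
    ∀ t : T, @Continuous _ _ _ τ (fun x : B t => DFinsupp.single t x)}

/-- The canonical copy of `⊕_{t ∈ S} B t` inside `Π₀ t, B t`: the submodule of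
families vanishing at every `t ∈ T ∖ S`. -/
def subSum {T : Type*} (B : T → Type*) [DecidableEq T]
    [∀ t, AddCommGroup (B t)] [∀ t, Module ℝ (B t)] (S : Set T) :
    Submodule ℝ (Π₀ t, B t) where
  carrier := {x | ∀ t ∉ S, x t = 0}
  add_mem' := by intro a b ha hb t ht; simp [ha t ht, hb t ht]
  zero_mem' := by intro t ht; simp
  smul_mem' := by intro c x hx t ht; simp [hx t ht]

section Aux

variable {T : Type*} [DecidableEq T] {B : T → Type*}
  [∀ t, NormedAddCommGroup (B t)] [∀ t, NormedSpace ℝ (B t)]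

local instance factOneLeTop : Fact ((1 : ℝ≥0∞) ≤ ∞) := ⟨le_top⟩

lemma lc_continuous_single (t : T) :
    @Continuous _ _ _ (lcSumTopology B) (fun v : B t => DFinsupp.single t v) := by
  rw [lcSumTopology]
  exact continuous_sInf_rng.2 fun τ hτ => hτ.2.2.2 t

/-- The weighted inclusion of the direct sum into `ℓ^∞`. -/
noncomputable def lpPhi (c : T → ℝ) : (Π₀ t, B t) →ₗ[ℝ] lp B ∞ where
  toFun x := ⟨fun t => c t • x t, by
    classical
    apply memℓp_infty
    have hsub : (Set.range fun t' => ‖c t' • x t'‖) ⊆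
        ↑((x.support.image fun t' => ‖c t' • x t'‖) ∪ {0}) := by
      rintro _ ⟨t', rfl⟩
      by_cases h : t' ∈ x.support
      · exact Finset.mem_coe.2 (Finset.mem_union_left _ (Finset.mem_image_of_mem _ h))
      · have hx : x t' = 0 := DFinsupp.notMem_support_iff.1 h
        simp [hx]
    exact (((x.support.image fun t' => ‖c t' • x t'‖) ∪ {0}).finite_toSet.bddAbove).mono hsub⟩
  map_add' x y := by
    ext t
    simp [smul_add]; rfl
  map_smul' a x := by
    ext t
    simp only [RingHom.id_apply, lp.coeFn_smul, Pi.smul_apply, DFinsupp.smul_apply]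
    exact smul_comm _ _ _

@[simp] lemma lpPhi_apply (c : T → ℝ) (x : Π₀ t, B t) (t' : T) :
    (lpPhi c x : ∀ t, B t) t' = c t' • x t' := rfl

lemma lpPhi_single_norm_le (c : T → ℝ) (t : T) (v : B t) :
    ‖lpPhi c (DFinsupp.single t v)‖ ≤ |c t| * ‖v‖ := by
  rw [lp.norm_eq_ciSup]
  refine Real.iSup_le (fun t' => ?_) (by positivity)
  rw [lpPhi_apply]
  by_cases h : t' = t
  · subst h
    simp [norm_smul, Real.norm_eq_abs]
  · rw [DFinsupp.single_eq_of_ne h]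
    simp only [smul_zero, norm_zero]
    positivity

lemma lpPhi_topology_mem (c : T → ℝ) :
    (TopologicalSpace.induced ((lpPhi c : (Π₀ t, B t) →ₗ[ℝ] lp B ∞)) inferInstance) ∈
      {τ : TopologicalSpace (Π₀ t, B t) |
        @IsTopologicalAddGroup _ τ _ ∧ @ContinuousSMul ℝ _ _ _ τ ∧
        @LocallyConvexSpace ℝ _ _ _ _ _ τ ∧
        ∀ t : T, @Continuous _ _ _ τ (fun x : B t => DFinsupp.single t x)} := by
  refine ⟨topologicalAddGroup_induced (lpPhi c), continuousSMul_induced (lpPhi c).toMulActionHom,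
    LocallyConvexSpace.induced (lpPhi c), fun t => ?_⟩
  rw [continuous_induced_rng]
  have hb : Continuous (((lpPhi c : (Π₀ t, B t) →ₗ[ℝ] lp B ∞)).comp (DFinsupp.lsingle t)) :=
    AddMonoidHomClass.continuous_of_bound _ |c t| fun v => by
      simpa using lpPhi_single_norm_le c t v
  exact hb

lemma lpPhi_lc_continuous (c : T → ℝ) :
    @Continuous _ _ (lcSumTopology B) _ ((lpPhi c : (Π₀ t, B t) →ₗ[ℝ] lp B ∞)) := by
  have hle : lcSumTopology B ≤ TopologicalSpace.induced ((lpPhi c : (Π₀ t, B t) →ₗ[ℝ] lp B ∞)) inferInstance := by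
    rw [lcSumTopology]; exact sInf_le (lpPhi_topology_mem c)
  exact continuous_le_dom hle continuous_induced_dom

lemma coordSet_finite (r : (Π₀ t, B t) →ₗ[ℝ] (Π₀ t, B t))
    (hr : @Continuous _ _ (lcSumTopology B) (lcSumTopology B) r) (t : T) :
    {t' : T | ∃ v : B t, r (DFinsupp.single t v) t' ≠ 0}.Finite := by
  classical
  by_contra hfin
  have hinf : {t' : T | ∃ v : B t, r (DFinsupp.single t v) t' ≠ 0}.Infinite := hfin
  set e := hinf.natEmbedding with he
  set f : ℕ → T := fun n => (e n : T) with hfdef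
  have hf : Function.Injective f := fun a b h => e.injective (Subtype.ext h)
  have hmem : ∀ n, ∃ v : B t, r (DFinsupp.single t v) (f n) ≠ 0 := fun n => (e n).2
  choose v hv using hmem
  have hwpos : ∀ n, 0 < ‖r (DFinsupp.single t (v n)) (f n)‖ :=
    fun n => norm_pos_iff.2 (hv n)
  have hvpos : ∀ n, 0 < ‖v n‖ := by
    intro n
    rcases eq_or_ne (v n) 0 with h | h
    · exfalso; apply hv n; rw [h]; simp
    · exact norm_pos_iff.2 h
  set c : T → ℝ := fun s =>
    if h : ∃ n, f n = s then
      ((h.choose : ℝ) + 1) * ‖v h.choose‖ / ‖r (DFinsupp.single t (v h.choose)) s‖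
    else 0 with hcdef
  have hcfn : ∀ n, c (f n) =
      ((n : ℝ) + 1) * ‖v n‖ / ‖r (DFinsupp.single t (v n)) (f n)‖ := by
    intro n
    have h : ∃ m, f m = f n := ⟨n, rfl⟩
    have h2 : h.choose = n := hf h.choose_spec
    rw [hcdef]
    simp only [dif_pos h, h2]
  set q : Seminorm ℝ (B t) :=
    (normSeminorm ℝ (lp B ∞)).comp ((lpPhi c).comp (r.comp (DFinsupp.lsingle t))) with hqdef
  have hq : Continuous q := by
    have h2 : @Continuous (B t) (Π₀ s, B s) _ (lcSumTopology B)
        (fun v => r (DFinsupp.single t v)) :=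
      @Continuous.comp _ _ _ _ (lcSumTopology B) (lcSumTopology B) _ _ hr
        (lc_continuous_single t)
    have h3 : Continuous (fun v : B t => lpPhi c (r (DFinsupp.single t v))) :=
      @Continuous.comp _ _ _ _ (lcSumTopology B) _ _ _ (lpPhi_lc_continuous c) h2
    exact continuous_norm.comp h3
  obtain ⟨K, hK0, hK⟩ := Seminorm.bound_of_continuous_normedSpace q hq
  have key : ∀ n : ℕ, ((n : ℝ) + 1) ≤ K := by
    intro n
    have hnn : 0 ≤ c (f n) := by
      rw [hcfn]; positivity
    have step : ((n : ℝ) + 1) * ‖v n‖ ≤ K * ‖v n‖ := by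
      calc ((n : ℝ) + 1) * ‖v n‖
          = c (f n) * ‖r (DFinsupp.single t (v n)) (f n)‖ := by
            rw [hcfn, div_mul_cancel₀ _ (ne_of_gt (hwpos n))]
        _ = ‖c (f n) • (r (DFinsupp.single t (v n))) (f n)‖ := by
            rw [norm_smul, Real.norm_eq_abs, abs_of_nonneg hnn]
        _ = ‖(lpPhi c (r (DFinsupp.single t (v n))) : ∀ s, B s) (f n)‖ := rfl
        _ ≤ ‖lpPhi c (r (DFinsupp.single t (v n)))‖ :=
            lp.norm_apply_le_norm ENNReal.top_ne_zero _ _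
        _ = q (v n) := rfl
        _ ≤ K * ‖v n‖ := hK _
    exact le_of_mul_le_mul_right step (hvpos n)
  obtain ⟨n, hn⟩ := exists_nat_gt K
  have := key n
  linarith

end Aux

/-- If `T` is uncountable, `(B t)` Banach spaces, and
`r : ⊕_t B t → ⊕_t B t` a continuous linear map of the locally convex direct sum into
itself, then every countable `A ⊆ T` is contained in a countable `S ⊆ T` with
`r(⊕_{t∈S} B t) ⊆ ⊕_{t∈S} B t`. -/
theorem stmt0 {T : Type*} [DecidableEq T] [Uncountable T]
    (B : T → Type*) [∀ t, NormedAddCommGroup (B t)] [∀ t, NormedSpace ℝ (B t)]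
    [∀ t, CompleteSpace (B t)]
    (r : (Π₀ t, B t) →ₗ[ℝ] (Π₀ t, B t))
    (hr : @Continuous _ _ (lcSumTopology B) (lcSumTopology B) r)
    (A : Set T) (hA : A.Countable) :
    ∃ S : Set T, S.Countable ∧ A ⊆ S ∧
      ∀ x ∈ subSum B S, r x ∈ subSum B S := by
  classical
  set C : T → Set T := fun t => {t' | ∃ v : B t, r (DFinsupp.single t v) t' ≠ 0} with hC
  have hCfin : ∀ t, (C t).Finite := fun t => coordSet_finite r hr t
  set Sseq : ℕ → Set T := fun n => Nat.rec A (fun _ s => s ∪ ⋃ t ∈ s, C t) n with hSseq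
  have hstep : ∀ n, Sseq (n + 1) = Sseq n ∪ ⋃ t ∈ Sseq n, C t := fun n => rfl
  have hcount : ∀ n, (Sseq n).Countable := by
    intro n
    induction n with
    | zero => exact hA
    | succ n ih =>
        rw [hstep]
        exact ih.union (ih.biUnion fun t _ => (hCfin t).countable)
  refine ⟨⋃ n, Sseq n, Set.countable_iUnion hcount, Set.subset_iUnion Sseq 0, ?_⟩
  have hclosed : ∀ t ∈ ⋃ n, Sseq n, C t ⊆ ⋃ n, Sseq n := by
    intro t ht
    obtain ⟨n, hn⟩ := Set.mem_iUnion.1 ht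
    intro t' ht'
    refine Set.mem_iUnion.2 ⟨n + 1, ?_⟩
    rw [hstep]
    exact Or.inr (Set.mem_biUnion hn ht')
  intro x hx
  have hx' : ∀ s ∉ ⋃ n, Sseq n, x s = 0 := hx
  show ∀ t' ∉ ⋃ n, Sseq n, (r x) t' = 0
  intro t' ht'
  have hsupp : ∀ s ∈ x.support, s ∈ ⋃ n, Sseq n := by
    intro s hs
    by_contra h
    exact (DFinsupp.mem_support_iff.1 hs) (hx' s h)
  have hxsum : x = ∑ u ∈ x.support, DFinsupp.single u (x u) := by
    conv_lhs => rw [← DFinsupp.sum_single (f := x)]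
    rfl
  rw [hxsum, map_sum, DFinsupp.finset_sum_apply]
  refine Finset.sum_eq_zero fun u hu => ?_
  by_contra h
  exact ht' (hclosed u (hsupp u hu) ⟨x u, h⟩)
end

section
/- Let (B_t)_{t∈T} be a family of Banach spaces, X a subspace of B = ⊕_{t∈T} B_t, and r : B → X a continuous linear map with r(x) = x for every x ∈ X. If S ⊆ R ⊆ T and both S and R are r-admissible, then X_S = r(⊕_{t∈S} B_t) is a complemented subspace of X_R = r(⊕_{t∈R} B_t), i.e., there exists a continuous linear map p : X_R → X_S with p(x) = x for all x ∈ X_S. -/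
open DFinsupp

open scoped Classical in
lemma lcSum_cont_of_single {T : Type*} [DecidableEq T] (B : T → Type*)
    [∀ t, AddCommGroup (B t)] [∀ t, Module ℝ (B t)] [∀ t, TopologicalSpace (B t)]
    {E : Type*} [AddCommGroup E] [Module ℝ E] [tE : TopologicalSpace E]
    [IsTopologicalAddGroup E] [ContinuousSMul ℝ E] [LocallyConvexSpace ℝ E]
    (f : (Π₀ t, B t) →ₗ[ℝ] E)
    (hf : ∀ t, Continuous fun x : B t => f (DFinsupp.single t x)) :
    @Continuous _ _ (lcSumTopology B) _ f := by
  refine continuous_sInf_dom (t := tE.induced f) ?_ (continuous_iff_le_induced.2 le_rfl)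
  exact ⟨topologicalAddGroup_induced f, continuousSMul_induced f,
    LocallyConvexSpace.induced f, fun t => continuous_induced_rng.2 (hf t)⟩

/-- Let `X` be a subspace of `B = ⊕_t B t` and `r : B → X` a continuous
linear map with `r x = x` for `x ∈ X`. If `S ⊆ R ⊆ T` and both `S` and `R` are
`r`-admissible, then `X_S = r(⊕_{t∈S} B t)` is a complemented subspace of
`X_R = r(⊕_{t∈R} B t)`: there is a continuous linear `p : X_R → X_S` which is the
identity on `X_S`. -/
theorem stmt5 {T : Type*} [DecidableEq T]
    (B : T → Type*) [∀ t, NormedAddCommGroup (B t)] [∀ t, NormedSpace ℝ (B t)]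
    [∀ t, CompleteSpace (B t)]
    [τ : TopologicalSpace (Π₀ t, B t)] (hτ : τ = lcSumTopology B)
    (X : Submodule ℝ (Π₀ t, B t))
    (r : (Π₀ t, B t) →ₗ[ℝ] (Π₀ t, B t)) (hr_cont : Continuous r)
    (hr_ran : ∀ x, r x ∈ X) (hr_id : ∀ x ∈ X, r x = x)
    (S R : Set T) (hSR : S ⊆ R)
    (hS : ∀ x ∈ subSum B S, r x ∈ subSum B S)
    (hR : ∀ x ∈ subSum B R, r x ∈ subSum B R) :
    ∃ p : ↥(Submodule.map r (subSum B R)) →L[ℝ] ↥(Submodule.map r (subSum B S)),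
      ∀ (x : ↥(Submodule.map r (subSum B R)))
        (hx : (x : Π₀ t, B t) ∈ Submodule.map r (subSum B S)),
        (p x : Π₀ t, B t) = (x : Π₀ t, B t) := by
  classical
  have hτ2 : τ = sInf {σ : TopologicalSpace (Π₀ t, B t) |
      @IsTopologicalAddGroup _ σ _ ∧ @ContinuousSMul ℝ _ _ _ σ ∧
      @LocallyConvexSpace ℝ _ _ _ _ _ σ ∧
      ∀ t : T, @Continuous _ _ _ σ (fun x : B t => DFinsupp.single t x)} := hτ
  haveI hg : IsTopologicalAddGroup (Π₀ t, B t) := by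
    rw [hτ2]; exact topologicalAddGroup_sInf fun τ' hτ' => hτ'.1
  haveI hsm : ContinuousSMul ℝ (Π₀ t, B t) := by
    rw [hτ2]; exact continuousSMul_sInf fun τ' hτ' => hτ'.2.1
  haveI hlc : LocallyConvexSpace ℝ (Π₀ t, B t) := by
    rw [hτ2]; exact LocallyConvexSpace.sInf fun τ' hτ' => hτ'.2.2.1
  have hsingle : ∀ t : T, Continuous fun x : B t => DFinsupp.single t x := by
    intro t
    rw [hτ2]
    exact continuous_sInf_rng.2 fun τ' hτ' => hτ'.2.2.2 t
  -- the projection onto coordinates in S, followed by r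
  set πS : (Π₀ t, B t) →ₗ[ℝ] (Π₀ t, B t) := DFinsupp.filterLinearMap ℝ B (· ∈ S) with hπS_def
  set f : (Π₀ t, B t) →ₗ[ℝ] (Π₀ t, B t) := r.comp πS with hf_def
  have hf_cont : Continuous f := by
    have key : @Continuous _ _ (lcSumTopology B) _ f := by
      refine lcSum_cont_of_single B f fun t => ?_
      have he : ∀ x : B t, f (DFinsupp.single t x)
          = if t ∈ S then r (DFinsupp.single t x) else 0 := by
        intro x
        simp only [hf_def, LinearMap.comp_apply, hπS_def, DFinsupp.filterLinearMap_apply,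
          DFinsupp.filter_single]
        split_ifs <;> simp
      simp only [he]
      split_ifs with h
      · exact hr_cont.comp (hsingle t)
      · exact continuous_const
    rwa [← hτ] at key
  have hf_mem : ∀ x : Π₀ t, B t, f x ∈ Submodule.map r (subSum B S) := by
    intro x
    exact ⟨πS x, fun t ht => DFinsupp.filter_apply_neg x ht, rfl⟩
  refine ⟨⟨((f.comp (Submodule.map r (subSum B R)).subtype).codRestrict _
      fun x => hf_mem x), ?_⟩, ?_⟩
  · exact Continuous.subtype_mk (hf_cont.comp continuous_subtype_val) _
  · rintro ⟨x, hxR⟩ ⟨y, hyS, rfl⟩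
    have hxS : r y ∈ subSum B S := hS y hyS
    have hπ : πS (r y) = r y := by
      ext t
      simp only [hπS_def, DFinsupp.filterLinearMap_apply]
      by_cases h : t ∈ S
      · exact DFinsupp.filter_apply_pos _ h
      · rw [DFinsupp.filter_apply_neg _ h, hxS t h]
    have hfin : f (r y) = r y := by
      rw [hf_def, LinearMap.comp_apply, hπ, hr_id _ (hr_ran y)]
    exact hfin
end

section
/- Let (B_t)_{t∈T} be a family of Banach spaces, X a subspace of B = ⊕_{t∈T} B_t, and r : B → X a continuous linear map with r(x) = x for every x ∈ X. If S ⊆ R ⊆ T and both S and R are r-admissible, then the quotient X_R / X_S, where X_S = r(⊕_{t∈S} B_t) and X_R = r(⊕_{t∈R} B_t), is isomorphic (as a topological vector space) to a complemented subspace of the locally convex direct sum ⊕_{t∈R∖S} B_t. -/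
open DFinsupp

section Aux

variable {T : Type*} [DecidableEq T] (B : T → Type*)
  [∀ t, AddCommGroup (B t)] [∀ t, Module ℝ (B t)] [∀ t, TopologicalSpace (B t)]

theorem lc_addGroup : @IsTopologicalAddGroup _ (lcSumTopology B) _ :=
  topologicalAddGroup_sInf fun _ ht => ht.1

theorem lc_smul : @ContinuousSMul ℝ _ _ _ (lcSumTopology B) :=
  continuousSMul_sInf fun _ ht => ht.2.1

theorem lc_lcs : @LocallyConvexSpace ℝ _ _ _ _ _ (lcSumTopology B) :=
  LocallyConvexSpace.sInf fun _ ht => ht.2.2.1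

theorem lc_single (t : T) :
    @Continuous _ _ _ (lcSumTopology B) (fun x : B t => DFinsupp.single t x) :=
  continuous_sInf_rng.2 fun _ ht => ht.2.2.2 t

/-- Universal property of the locally convex direct sum topology. -/
theorem lc_univ {E : Type*} [AddCommGroup E] [Module ℝ E] [TopologicalSpace E]
    [IsTopologicalAddGroup E] [ContinuousSMul ℝ E] [LocallyConvexSpace ℝ E]
    (f : (Π₀ t, B t) →ₗ[ℝ] E)
    (h : ∀ t, Continuous fun x : B t => f (DFinsupp.single t x)) :
    @Continuous _ _ (lcSumTopology B) _ f := by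
  rw [@continuous_iff_le_induced _ _ _ (lcSumTopology B) _]
  refine sInf_le ⟨?_, ?_, ?_, fun t => continuous_induced_rng.2 (h t)⟩
  · exact topologicalAddGroup_induced f.toAddMonoidHom
  · letI : TopologicalSpace (Π₀ t, B t) := TopologicalSpace.induced f ‹_›
    exact Topology.IsInducing.continuousSMul (g := f) ⟨rfl⟩ continuous_id
      (fun {c x} => f.map_smul c x)
  · exact LocallyConvexSpace.induced f

end Aux

/-- Let `X` be a subspace of `B = ⊕_t B t` and `r : B → X` a continuous
linear map with `r x = x` for `x ∈ X`. If `S ⊆ R ⊆ T` are both `r`-admissible, then the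
quotient `X_R / X_S` (with the quotient topology), where `X_S = r(⊕_{t∈S} B t)` and
`X_R = r(⊕_{t∈R} B t)`, is isomorphic as a topological vector space to a complemented
subspace of `⊕_{t∈R∖S} B t`. -/
theorem stmt6 {T : Type*} [DecidableEq T]
    (B : T → Type*) [∀ t, NormedAddCommGroup (B t)] [∀ t, NormedSpace ℝ (B t)]
    [∀ t, CompleteSpace (B t)]
    [τ : TopologicalSpace (Π₀ t, B t)] (hτ : τ = lcSumTopology B)
    (X : Submodule ℝ (Π₀ t, B t))
    (r : (Π₀ t, B t) →ₗ[ℝ] (Π₀ t, B t)) (hr_cont : Continuous r)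
    (hr_ran : ∀ x, r x ∈ X) (hr_id : ∀ x ∈ X, r x = x)
    (S R : Set T) (hSR : S ⊆ R)
    (hS : ∀ x ∈ subSum B S, r x ∈ subSum B S)
    (hR : ∀ x ∈ subSum B R, r x ∈ subSum B R) :
    ∃ Y : Submodule ℝ (Π₀ t, B t), Y ≤ subSum B (R \ S) ∧
      (∃ q : ↥(subSum B (R \ S)) →L[ℝ] ↥Y,
        ∀ (y : ↥(subSum B (R \ S))) (hy : (y : Π₀ t, B t) ∈ Y),
          (q y : Π₀ t, B t) = (y : Π₀ t, B t)) ∧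
      Nonempty ((↥(Submodule.map r (subSum B R)) ⧸
          (Submodule.map r (subSum B S)).comap (Submodule.map r (subSum B R)).subtype)
        ≃L[ℝ] ↥Y) := by
  subst hτ
  letI : TopologicalSpace (Π₀ t, B t) := lcSumTopology B
  haveI := lc_addGroup B
  haveI := lc_smul B
  haveI := lc_lcs B
  classical
  -- the coordinate projection onto `R \ S`
  set P : (Π₀ t, B t) →ₗ[ℝ] (Π₀ t, B t) :=
    DFinsupp.filterLinearMap ℝ B (· ∈ R \ S) with hPdef
  have hPapp : ∀ (x : Π₀ t, B t) (t : T), P x t = if t ∈ R \ S then x t else 0 := by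
    intro x t; simp [hPdef, DFinsupp.filter_apply]
  have hP1 : ∀ x : Π₀ t, B t, P x ∈ subSum B (R \ S) := by
    intro x t ht; rw [hPapp, if_neg ht]
  have hP2 : ∀ x ∈ subSum B (R \ S), P x = x := by
    intro x hx; ext t; rw [hPapp]
    by_cases h : t ∈ R \ S
    · rw [if_pos h]
    · rw [if_neg h, hx t h]
  have hP3 : ∀ x ∈ subSum B S, P x = 0 := by
    intro x hx; ext t; rw [hPapp]
    by_cases h : t ∈ R \ S
    · rw [if_pos h, hx t h.2]; rfl
    · rw [if_neg h]; rfl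
  have hP4 : ∀ x ∈ subSum B R, x - P x ∈ subSum B S := by
    intro x hx t ht
    rw [DFinsupp.sub_apply, hPapp]
    by_cases h : t ∈ R \ S
    · rw [if_pos h, sub_self]
    · rw [if_neg h, sub_zero]
      exact hx t fun hRt => h ⟨hRt, ht⟩
  have hPcont : Continuous P := by
    refine lc_univ B P (fun t => ?_)
    by_cases h : t ∈ R \ S
    · have : (fun x : B t => P (DFinsupp.single t x))
          = fun x : B t => DFinsupp.single t x :=
        funext fun x => DFinsupp.filter_single_pos _ _ h
      rw [this]; exact lc_single B t
    · have : (fun x : B t => P (DFinsupp.single t x)) = fun _ : B t => 0 :=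
        funext fun x => DFinsupp.filter_single_neg _ _ h
      rw [this]; exact continuous_const
  have hDR : subSum B (R \ S) ≤ subSum B R := fun x hx t ht => hx t fun h => ht h.1
  have hSsub : subSum B S ≤ subSum B R := fun x hx t ht => hx t fun h => ht (hSR h)
  -- the subspace Y
  set Y : Submodule ℝ (Π₀ t, B t) :=
    Submodule.map (P.comp r) (subSum B (R \ S)) with hYdef
  have hYD : Y ≤ subSum B (R \ S) := by
    rintro x ⟨d, hd, rfl⟩; exact hP1 _
  -- the key projection identity
  have hkey : ∀ x ∈ Y, P (r x) = x := by
    rintro x ⟨d, hd, rfl⟩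
    have hrd : r d ∈ subSum B R := hR _ (hDR hd)
    have hs : r d - P (r d) ∈ subSum B S := hP4 _ hrd
    have e1 : (P.comp r) d = r d - (r d - P (r d)) := by
      simp only [LinearMap.comp_apply]; abel
    show P (r ((P.comp r) d)) = (P.comp r) d
    rw [e1, map_sub, map_sub, hr_id _ (hr_ran d), hP3 _ (hS _ hs), sub_zero,
      sub_sub_cancel]
  refine ⟨Y, hYD, ?_, ?_⟩
  · -- the continuous projection q
    refine ⟨⟨LinearMap.codRestrict Y ((P.comp r).comp (subSum B (R \ S)).subtype)
        (fun c => Submodule.mem_map_of_mem c.2), ?_⟩, ?_⟩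
    · exact Continuous.subtype_mk
        ((hPcont.comp hr_cont).comp continuous_subtype_val) _
    · intro y hy
      exact hkey _ hy
  · -- the topological isomorphism with the quotient
    set XR := Submodule.map r (subSum B R) with hXRdef
    set N := (Submodule.map r (subSum B S)).comap XR.subtype with hNdef
    have hψmem : ∀ x : ↥XR, P (x : Π₀ t, B t) ∈ Y := by
      rintro ⟨x, d, hd, rfl⟩
      have h1 : d - P d ∈ subSum B S := hP4 _ hd
      have e1 : P (r d) = P (r (P d)) := by
        conv_lhs => rw [show d = (d - P d) + P d by abel]
        rw [map_add, map_add, hP3 _ (hS _ h1), zero_add]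
      show P (r d) ∈ Y
      rw [e1]
      exact ⟨P d, hP1 d, rfl⟩
    set ψ : ↥XR →ₗ[ℝ] ↥Y :=
      LinearMap.codRestrict Y (P.comp XR.subtype) hψmem with hψdef
    have hψN : N ≤ LinearMap.ker ψ := by
      rintro x hx
      obtain ⟨s, hs, hxs⟩ := hx
      have hxs' : r s = (x : Π₀ t, B t) := hxs
      have : P ((x : Π₀ t, B t)) = 0 := by rw [← hxs']; exact hP3 _ (hS _ hs)
      exact LinearMap.mem_ker.2 (Subtype.ext this)
    set φ : (↥XR ⧸ N) →ₗ[ℝ] ↥Y := Submodule.liftQ N ψ hψN with hφdef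
    have hg0mem : ∀ y : ↥Y, r (y : Π₀ t, B t) ∈ XR := by
      intro y; exact Submodule.mem_map_of_mem (hDR (hYD y.2))
    set g0 : ↥Y →ₗ[ℝ] ↥XR :=
      LinearMap.codRestrict XR (r.comp Y.subtype) hg0mem with hg0def
    set g : ↥Y →ₗ[ℝ] (↥XR ⧸ N) := N.mkQ.comp g0 with hgdef
    have hφg : ∀ y : ↥Y, φ (g y) = y := by
      intro y
      have : φ (g y) = ψ (g0 y) := by
        simp [hgdef, hφdef, Submodule.liftQ_apply]
      rw [this]
      exact Subtype.ext (hkey _ y.2)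
    have hgφ : ∀ z : ↥XR ⧸ N, g (φ z) = z := by
      intro z
      obtain ⟨x, rfl⟩ := N.mkQ_surjective z
      obtain ⟨d, hd, hx⟩ := x.2
      have hxX : (x : Π₀ t, B t) ∈ X := by rw [← hx]; exact hr_ran d
      have hxR : (x : Π₀ t, B t) ∈ subSum B R := by rw [← hx]; exact hR _ hd
      have hs : (x : Π₀ t, B t) - P (x : Π₀ t, B t) ∈ subSum B S := hP4 _ hxR
      have e1 : r (P (x : Π₀ t, B t))
          = (x : Π₀ t, B t) - r ((x : Π₀ t, B t) - P (x : Π₀ t, B t)) := by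
        conv_lhs => rw [show P ((x : Π₀ t, B t))
          = (x : Π₀ t, B t) - ((x : Π₀ t, B t) - P (x : Π₀ t, B t)) by abel]
        rw [map_sub, hr_id _ hxX]
      have hmem : g0 (φ (N.mkQ x)) - x ∈ N := by
        show (↑(g0 (φ (N.mkQ x)) - x) : Π₀ t, B t) ∈ Submodule.map r (subSum B S)
        have : (↑(g0 (φ (N.mkQ x)) - x) : Π₀ t, B t)
            = r (P (x : Π₀ t, B t)) - (x : Π₀ t, B t) := by
          simp [hgdef, hφdef, hg0def, hψdef, Submodule.liftQ_apply]
          rfl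
        rw [this, e1]
        have : (x : Π₀ t, B t) - r ((x : Π₀ t, B t) - P (x : Π₀ t, B t))
            - (x : Π₀ t, B t) = -(r ((x : Π₀ t, B t) - P (x : Π₀ t, B t))) := by abel
        rw [this]
        exact neg_mem ⟨_, hs, rfl⟩
      show N.mkQ (g0 (φ (N.mkQ x))) = N.mkQ x
      exact (Submodule.Quotient.eq N).mpr hmem
    -- continuity
    have hφcont : Continuous φ := by
      rw [(Submodule.isOpenQuotientMap_mkQ N).isQuotientMap.continuous_iff]
      have : (φ ∘ N.mkQ : ↥XR → ↥Y) = ψ := by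
        funext x; simp [hφdef, Submodule.liftQ_apply]
      rw [this]
      exact Continuous.subtype_mk (hPcont.comp continuous_subtype_val) _
    have hgcont : Continuous g := by
      have : (g : ↥Y → ↥XR ⧸ N) = (N.mkQ : ↥XR → ↥XR ⧸ N) ∘ (g0 : ↥Y → ↥XR) := rfl
      rw [this]
      exact ((Submodule.isOpenQuotientMap_mkQ N).continuous).comp
        (Continuous.subtype_mk (hr_cont.comp continuous_subtype_val) _)
    exact ⟨⟨⟨φ, g, fun z => hgφ z, fun y => hφg y⟩, hφcont, hgcont⟩⟩
end

section
/- Let (B_t)_{t∈T} be a family of Banach spaces, X a subspace of B = ⊕_{t∈T} B_t, r : B → X a continuous linear map with r(x) = x for every x ∈ X, and let S ⊆ R ⊆ T with both S and R r-admissible. Then X_R = r(⊕_{t∈R} B_t) is isomorphic as a topological vector space to the direct sum X_S ⊕ (X_R / X_S), where X_S = r(⊕_{t∈S} B_t) and X_R / X_S carries the quotient topology. -/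
open DFinsupp

theorem lcSumTopology_spec {T : Type*} (B : T → Type*) [DecidableEq T]
    [∀ t, AddCommGroup (B t)] [∀ t, Module ℝ (B t)] [∀ t, TopologicalSpace (B t)] :
    @IsTopologicalAddGroup _ (lcSumTopology B) _ ∧ @ContinuousSMul ℝ _ _ _ (lcSumTopology B) ∧
    @LocallyConvexSpace ℝ _ _ _ _ _ (lcSumTopology B) ∧
    ∀ t : T, @Continuous _ _ _ (lcSumTopology B) (fun x : B t => DFinsupp.single t x) :=
  ⟨topologicalAddGroup_sInf fun _ h => h.1,
   continuousSMul_sInf fun _ h => h.2.1,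
   LocallyConvexSpace.sInf fun _ h => h.2.2.1,
   fun t => continuous_sInf_rng.2 fun _ h => h.2.2.2 t⟩

theorem lcSum_continuous {T : Type*} {B : T → Type*} [DecidableEq T]
    [∀ t, AddCommGroup (B t)] [∀ t, Module ℝ (B t)] [∀ t, TopologicalSpace (B t)]
    {E : Type*} [AddCommGroup E] [Module ℝ E] [tE : TopologicalSpace E]
    [IsTopologicalAddGroup E] [ContinuousSMul ℝ E] [LocallyConvexSpace ℝ E]
    (f : (Π₀ t, B t) →ₗ[ℝ] E)
    (hf : ∀ t, Continuous fun x : B t => f (DFinsupp.single t x)) :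
    @Continuous _ _ (lcSumTopology B) _ f := by
  rw [@continuous_iff_le_induced _ _ _ (lcSumTopology B) tE]
  refine sInf_le ⟨topologicalAddGroup_induced f, continuousSMul_induced f,
    LocallyConvexSpace.induced f, fun t => ?_⟩
  exact continuous_induced_rng.2 (hf t)

set_option maxHeartbeats 1000000
set_option synthInstance.maxHeartbeats 400000

/-- Let `X` be a subspace of `B = ⊕_t B t` and `r : B → X` a continuous
linear map with `r x = x` for `x ∈ X`, and let `S ⊆ R ⊆ T` both be `r`-admissible.
Then `X_R = r(⊕_{t∈R} B t)` is isomorphic as a topological vector space to the direct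
sum `X_S ⊕ (X_R / X_S)`, where `X_S = r(⊕_{t∈S} B t)` and `X_R / X_S` carries the
quotient topology. -/
theorem stmt7 {T : Type*} [DecidableEq T]
    (B : T → Type*) [∀ t, NormedAddCommGroup (B t)] [∀ t, NormedSpace ℝ (B t)]
    [∀ t, CompleteSpace (B t)]
    [τ : TopologicalSpace (Π₀ t, B t)] (hτ : τ = lcSumTopology B)
    (X : Submodule ℝ (Π₀ t, B t))
    (r : (Π₀ t, B t) →ₗ[ℝ] (Π₀ t, B t)) (hr_cont : Continuous r)
    (hr_ran : ∀ x, r x ∈ X) (hr_id : ∀ x ∈ X, r x = x)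
    (S R : Set T) (hSR : S ⊆ R)
    (hS : ∀ x ∈ subSum B S, r x ∈ subSum B S)
    (hR : ∀ x ∈ subSum B R, r x ∈ subSum B R) :
    Nonempty (↥(Submodule.map r (subSum B R)) ≃L[ℝ]
      (↥(Submodule.map r (subSum B S)) ×
        (↥(Submodule.map r (subSum B R)) ⧸
          (Submodule.map r (subSum B S)).comap (Submodule.map r (subSum B R)).subtype))) := by
  classical
  subst hτ
  letI : TopologicalSpace (Π₀ t, B t) := lcSumTopology B
  obtain ⟨i1, i2, i3, i4⟩ := lcSumTopology_spec B
  set M : Submodule ℝ (Π₀ t, B t) := Submodule.map r (subSum B R) with hM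
  set N : Submodule ℝ (Π₀ t, B t) := Submodule.map r (subSum B S) with hN
  -- the coordinate projection onto S
  set π : (Π₀ t, B t) →ₗ[ℝ] (Π₀ t, B t) := filterLinearMap ℝ B (· ∈ S) with hπ
  have hπ_cont : Continuous π := by
    refine lcSum_continuous π fun t => ?_
    by_cases ht : t ∈ S
    · have : (fun x : B t => π (DFinsupp.single t x)) = fun x : B t => DFinsupp.single t x := by
        funext x; simp [hπ, DFinsupp.filter_single_pos _ _ ht]
      rw [this]; exact i4 t
    · have : (fun x : B t => π (DFinsupp.single t x)) = fun _ : B t => (0 : Π₀ t, B t) := by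
        funext x; simp [hπ, DFinsupp.filter_single_neg _ _ ht]
      rw [this]; exact continuous_const
  have hπ_mem : ∀ x : Π₀ t, B t, π x ∈ subSum B S := by
    intro x t ht
    simp [hπ, DFinsupp.filter_apply, ht]
  have hπ_fix : ∀ x ∈ subSum B S, π x = x := by
    intro x hx
    ext t
    by_cases ht : t ∈ S
    · simp [hπ, DFinsupp.filter_apply, ht]
    · simp [hπ, DFinsupp.filter_apply, ht, hx t ht]
  have hSsubR : subSum B S ≤ subSum B R := fun x hx t ht => hx t fun hts => ht (hSR hts)
  have hNM : N ≤ M := Submodule.map_mono hSsubR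
  have hMX : ∀ x ∈ M, x ∈ X := by rintro x ⟨y, _, rfl⟩; exact hr_ran y
  have hNsub : ∀ x ∈ N, x ∈ subSum B S := by rintro x ⟨y, hy, rfl⟩; exact hS y hy
  -- the projection p : M → M
  have hp_mem : ∀ c : M, ((r.comp π).comp M.subtype) c ∈ M := by
    intro c
    exact hNM ⟨π (c : Π₀ t, B t), hπ_mem _, rfl⟩
  set plin : M →ₗ[ℝ] M := ((r.comp π).comp M.subtype).codRestrict M hp_mem with hplin
  have hp_cont : Continuous plin := by
    apply Continuous.subtype_mk
    exact (hr_cont.comp hπ_cont).comp continuous_subtype_val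
  set p : M →L[ℝ] M := ⟨plin, hp_cont⟩ with hp
  have hpN : ∀ c : M, ((p c : M) : Π₀ t, B t) ∈ N := fun c => ⟨π (c : Π₀ t, B t), hπ_mem _, rfl⟩
  have hpid : ∀ c : M, ((c : Π₀ t, B t) ∈ N) → p c = c := by
    intro c hc
    apply Subtype.ext
    show r (π (c : Π₀ t, B t)) = (c : Π₀ t, B t)
    rw [hπ_fix _ (hNsub _ hc), hr_id _ (hMX _ (hNM hc))]
  set N' : Submodule ℝ M := N.comap M.subtype with hN'
  have hmemN' : ∀ c : M, c ∈ N' ↔ ((c : Π₀ t, B t) ∈ N) := fun c => Iff.rfl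
  -- forward map
  set f₁ : M →L[ℝ] N := ⟨LinearMap.codRestrict N (M.subtype.comp plin) (fun c => hpN c),
    Continuous.subtype_mk (continuous_subtype_val.comp hp_cont) _⟩ with hf₁
  set f₂ : M →L[ℝ] (M ⧸ N') := ⟨N'.mkQ, continuous_quot_mk⟩ with hf₂
  set fwd : M →L[ℝ] (N × (M ⧸ N')) := f₁.prod f₂ with hfwd
  -- backward map
  have hj_mem : ∀ n : N, ((n : Π₀ t, B t)) ∈ M := fun n => hNM n.2
  set j : N →L[ℝ] M := ⟨LinearMap.codRestrict M N.subtype (fun n => hj_mem n),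
    Continuous.subtype_mk continuous_subtype_val _⟩ with hj
  have hplinp : ∀ c : M, plin c = p c := fun _ => rfl
  have hker : N' ≤ LinearMap.ker (LinearMap.id - plin) := by
    intro c hc
    have h1 : plin c = c := hpid c hc
    simp only [LinearMap.mem_ker, LinearMap.sub_apply, LinearMap.id_apply, h1, sub_self]
  set g : (M ⧸ N') →ₗ[ℝ] M := N'.liftQ (LinearMap.id - plin) hker with hg
  have hg_cont : Continuous g := by
    rw [← N'.isOpenQuotientMap_mkQ.continuous_comp_iff]
    have : (g ∘ N'.mkQ) = fun c : M => c - plin c := by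
      funext c
      simp [hg, Submodule.liftQ_apply]
    rw [this]
    exact continuous_id.sub hp_cont
  set gL : (M ⧸ N') →L[ℝ] M := ⟨g, hg_cont⟩ with hgL
  set bwd : (N × (M ⧸ N')) →L[ℝ] M := j.coprod gL with hbwd
  have hgmk : ∀ c : M, g (N'.mkQ c) = c - p c := fun c => by
    simp [hg, Submodule.liftQ_apply, ← hplinp]
  have hleft : Function.LeftInverse bwd fwd := by
    intro c
    show j (f₁ c) + g (N'.mkQ c) = c
    have h1 : j (f₁ c) = p c := Subtype.ext rfl
    rw [h1, hgmk c]
    abel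
  have hright : Function.RightInverse bwd fwd := by
    rintro ⟨n, q⟩
    obtain ⟨x, rfl⟩ := N'.mkQ_surjective q
    set z : M := j n + g (N'.mkQ x) with hz
    have hz' : z = j n + (x - p x) := by rw [hz, hgmk]
    have hpz : p z = j n := by
      have h1 : p (j n) = j n := hpid (j n) n.2
      have h2 : p (p x) = p x := hpid (p x) (hpN x)
      rw [hz']
      rw [map_add, map_sub, h1, h2, sub_self, add_zero]
    have hfz : f₁ z = n := by
      apply Subtype.ext
      show ((p z : M) : Π₀ t, B t) = (n : Π₀ t, B t)
      rw [hpz]; rfl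
    have hmkz : N'.mkQ z = N'.mkQ x := by
      rw [hz']
      have h1 : N'.mkQ (j n) = 0 := (Submodule.Quotient.mk_eq_zero _).2 n.2
      have h2 : N'.mkQ (p x) = 0 := (Submodule.Quotient.mk_eq_zero _).2 (hpN x)
      rw [map_add, map_sub, h1, h2, zero_add, sub_zero]
    show (f₁ z, N'.mkQ z) = (n, N'.mkQ x)
    rw [hfz, hmkz]
  exact ⟨ContinuousLinearEquiv.equivOfInverse fwd bwd hleft hright⟩
end
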